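/- Let W be a module over the degenerate affine Hecke algebra H_N. On the subspace of skew-invariants (W ⊗ (C^n)^{⊗N})^{S_N}_− (where S_N acts diagonally, on W via C[S_N] ⊂ H_N and on (C^n)^{⊗N} by permuting factors, and skew-invariants means each σ_p acts as −1), the assignments T_{ij}^{(s+1)} ↦ Σ_{p=1}^N y_p^s ⊗ E_{ij}^{(p)} (s = 0,1,2,..., with y_p^0 = 1) define an action of the Yangian Y(gl_n). -/

import Mathlib

/-- Auxiliary family in the free algebra: `yangT n 0 i j = δ_{ij}` and
`yangT n (s+1) i j` is the generator corresponding to `T_{ij}^{(s+1)}`. -/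
noncomputable def yangT (n : ℕ) : ℕ → Fin n → Fin n → FreeAlgebra ℂ (ℕ × Fin n × Fin n)
  | 0, i, j => if i = j then 1 else 0
  | s + 1, i, j => FreeAlgebra.ι ℂ (s, i, j)

/-- The defining relations of the Yangian `Y(gl_n)`: these are the
coefficients of `(u-v)·[T_{ij}(u), T_{kl}(v)] = T_{kj}(u)T_{il}(v) - T_{kj}(v)T_{il}(u)`
at `u^{-r} v^{-s}`, where `T_{ij}(u) = δ_{ij} + Σ_{s≥1} T_{ij}^{(s)} u^{-s}`. -/
inductive YangianRel (n : ℕ) :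
    FreeAlgebra ℂ (ℕ × Fin n × Fin n) → FreeAlgebra ℂ (ℕ × Fin n × Fin n) → Prop
  | rtt (r s : ℕ) (i j k l : Fin n) :
      YangianRel n
        (yangT n (r + 1) i j * yangT n s k l - yangT n s k l * yangT n (r + 1) i j
          - (yangT n r i j * yangT n (s + 1) k l - yangT n (s + 1) k l * yangT n r i j))
        (yangT n r k j * yangT n s i l - yangT n s k j * yangT n r i l)

/-- The Yangian `Y(gl_n)`. -/
abbrev Yangian (n : ℕ) := RingQuot (YangianRel n)

/-- The generators `T_{ij}^{(s)}` of `Y(gl_n)` (for `s = 0` this is `δ_{ij}`). -/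
noncomputable def yangGen (n : ℕ) (s : ℕ) (i j : Fin n) : Yangian n :=
  RingQuot.mkAlgHom ℂ (YangianRel n) (yangT n s i j)

/- An `H_N`-module `W` is given by a representation `ρ` of the symmetric
group `S_N` together with operators `y p` satisfying the relations
`σ y_p σ⁻¹ = y_{σ(p)}` and `[y_p, y_q] = σ_{pq}(y_p - y_q)` of the
degenerate affine Hecke algebra.  The tensor product `W ⊗ (ℂ^n)^{⊗N}` is
modelled as the space of `W`-valued coefficient functions
`(Fin N → Fin n) → W`. -/

variable {W : Type*} [AddCommGroup W] [Module ℂ W]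

/-- The diagonal action of `σ ∈ S_N` on `W ⊗ (ℂ^n)^{⊗N}`:
`σ` acts on `W` via `ρ` and permutes the `N` tensor factors `ℂ^n`. -/
noncomputable def diagPerm (n N : ℕ) (ρ : Equiv.Perm (Fin N) →* Module.End ℂ W)
    (σ : Equiv.Perm (Fin N)) : Module.End ℂ ((Fin N → Fin n) → W) where
  toFun F := fun h => ρ σ (F (h ∘ σ))
  map_add' F G := by funext h; simp
  map_smul' c F := by funext h; simp

/-- The subspace of skew invariants
`(W ⊗ (ℂ^n)^{⊗N})^{S_N}_-`: each permutation `σ` of the diagonal action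
acts as the sign `sgn σ`. -/
noncomputable def skewInv (n N : ℕ) (ρ : Equiv.Perm (Fin N) →* Module.End ℂ W) :
    Submodule ℂ ((Fin N → Fin n) → W) where
  carrier := {F | ∀ σ : Equiv.Perm (Fin N),
    diagPerm n N ρ σ F = (((Equiv.Perm.sign σ : ℤ) : ℂ)) • F}
  add_mem' {F G} hF hG := by
    intro σ
    rw [map_add, hF σ, hG σ, smul_add]
  zero_mem' := by
    intro σ
    rw [map_zero, smul_zero]
  smul_mem' c F hF := by
    intro σ
    rw [map_smul, hF σ, smul_comm]

/-- The operator `Σ_{p=1}^N y_p^s ⊗ E_{ij}^{(p)}` on `W ⊗ (ℂ^n)^{⊗N}`,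
by which the generator `T_{ij}^{(s+1)}` of the Yangian is to act. -/
noncomputable def skewDrinfeldOp (n N : ℕ) (y : Fin N → Module.End ℂ W)
    (s : ℕ) (i j : Fin n) : Module.End ℂ ((Fin N → Fin n) → W) where
  toFun F := fun h =>
    ∑ p : Fin N, if h p = i then ((y p) ^ s) (F (Function.update h p j)) else 0
  map_add' F G := by
    funext h
    have key : ∀ p : Fin N,
        (if h p = i then ((y p) ^ s) (F (Function.update h p j))
            + ((y p) ^ s) (G (Function.update h p j)) else 0)
          = (if h p = i then ((y p) ^ s) (F (Function.update h p j)) else 0)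
            + (if h p = i then ((y p) ^ s) (G (Function.update h p j)) else 0) := by
      intro p; split <;> simp
    simp only [Pi.add_apply, map_add, key, Finset.sum_add_distrib]
  map_smul' c F := by
    funext h
    have key : ∀ p : Fin N,
        (if h p = i then c • ((y p) ^ s) (F (Function.update h p j)) else 0)
          = c • (if h p = i then ((y p) ^ s) (F (Function.update h p j)) else 0) := by
      intro p; split <;> simp
    simp only [Pi.smul_apply, map_smul, key, ← Finset.smul_sum, RingHom.id_apply]

/-!
On a basis tensor, the product of `Σ_p y_p^a ⊗ E_{xx'}^{(p)}` and `Σ_q y_q^b ⊗ E_{zz'}^{(q)}`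
splits into a diagonal part `p = q`, which is `δ_{x'z}` times another operator of the same
family, and a sum over pairs `p ≠ q` of `y_p^a y_q^b ⊗ E_{xx'}^{(p)} E_{zz'}^{(q)}`. In the
RTT relation the diagonal parts cancel, and for each pair the Hecke relations give
`[y_p^{r+1}, y_q^s] - [y_p^r, y_q^{s+1}] = σ_{pq} (y_p^s y_q^r - y_p^r y_q^s)`. On skew
invariants `σ_{pq}` acts on `W` as `-1` times the transposition of the tensor factors `p` and
`q`, and this turns the pair sum into the right-hand side. The relations involving
`T^{(0)} = δ` are the `gl_n` commutation relations, which hold on the whole space.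
-/

section Hecke

variable {R : Type*} [Ring R] {u v τ : R}

theorem hecke_pow_commutator (huv : u * v - v * u = τ * (u - v)) (hv : SemiconjBy τ v u)
    (m : ℕ) :
    u ^ m * v - v * u ^ m = τ * (u ^ m - v ^ m) := by
  induction m with
  | zero => simp
  | succ m ih =>
    calc u ^ (m + 1) * v - v * u ^ (m + 1)
        = u * (u ^ m * v - v * u ^ m) + (u * v - v * u) * u ^ m := by
          rw [pow_succ']; noncomm_ring
      _ = u * τ * (u ^ m - v ^ m) + τ * (u - v) * u ^ m := by rw [ih, huv]; noncomm_ring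
      _ = τ * (u ^ (m + 1) - v ^ (m + 1)) := by rw [← hv.eq, pow_succ', pow_succ']; noncomm_ring

theorem hecke_rtt (huv : u * v - v * u = τ * (u - v)) (hu : SemiconjBy τ u v)
    (hv : SemiconjBy τ v u) (a b : ℕ) :
    u ^ (a + 1) * v ^ b - v ^ b * u ^ (a + 1) - (u ^ a * v ^ (b + 1) - v ^ (b + 1) * u ^ a)
      = τ * (u ^ b * v ^ a - u ^ a * v ^ b) := by
  have comm := hecke_pow_commutator huv hv
  induction b with
  | zero =>
    rw [zero_add, pow_one, pow_zero, mul_one, one_mul, sub_self, zero_sub, comm]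
    noncomm_ring
  | succ b ih =>
    calc _ = (u ^ (a + 1) * v ^ b - v ^ b * u ^ (a + 1)
            - (u ^ a * v ^ (b + 1) - v ^ (b + 1) * u ^ a)) * v
          + v ^ b * (u ^ (a + 1) * v - v * u ^ (a + 1))
          - v ^ (b + 1) * (u ^ a * v - v * u ^ a) := by
          rw [pow_succ v b, pow_succ v (b + 1)]; noncomm_ring
      _ = τ * (u ^ b * v ^ a - u ^ a * v ^ b) * v
          + v ^ b * τ * (u ^ (a + 1) - v ^ (a + 1)) - v ^ (b + 1) * τ * (u ^ a - v ^ a) := by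
          rw [ih, comm, comm]; noncomm_ring
      _ = τ * (u ^ (b + 1) * v ^ a - u ^ a * v ^ (b + 1)) := by
          have hpow : u ^ b * u ^ (a + 1) = u ^ (b + 1) * u ^ a := by
            rw [← pow_add, ← pow_add, Nat.add_right_comm, Nat.add_assoc]
          rw [← (hu.pow_right b).eq, ← (hu.pow_right (b + 1)).eq]
          simp only [mul_sub, sub_mul, mul_assoc, ← pow_succ, hpow]
          abel

end Hecke

section Operators

open Function Finset

variable {n N : ℕ}

theorem update_update_comp_swap (h : Fin N → Fin n) {p q : Fin N} (hpq : p ≠ q) (a b : Fin n) :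
    update (update h p a) q b ∘ Equiv.swap p q = update (update h p b) q a := by
  ext x
  rcases eq_or_ne x p with rfl | hxp
  · simp [hpq]
  rcases eq_or_ne x q with rfl | hxq
  · simp [hpq]
  · simp [Equiv.swap_apply_of_ne_of_ne hxp hxq, hxp, hxq]

/-- The coefficient of `h` in `(∑_{p ≠ q} A_{pq} ⊗ E_{xx'}^{(p)} E_{zz'}^{(q)}) F`. -/
noncomputable def pairOp (A : Fin N → Fin N → Module.End ℂ W) (x x' z z' : Fin n)
    (F : (Fin N → Fin n) → W) (h : Fin N → Fin n) : W :=
  ∑ p, ∑ q,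
    if p ≠ q ∧ h p = x ∧ h q = z then A p q (F (update (update h p x') q z')) else 0

theorem pairOp_sub (A B : Fin N → Fin N → Module.End ℂ W) (x x' z z' : Fin n)
    (F : (Fin N → Fin n) → W) (h : Fin N → Fin n) :
    pairOp (fun p q => A p q - B p q) x x' z z' F h
      = pairOp A x x' z z' F h - pairOp B x x' z z' F h := by
  simp only [pairOp, ← sum_sub_distrib]
  refine sum_congr rfl fun p _ => sum_congr rfl fun q _ => ?_
  split_ifs <;> simp

theorem pairOp_comm (A : Fin N → Fin N → Module.End ℂ W) (x x' z z' : Fin n)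
    (F : (Fin N → Fin n) → W) (h : Fin N → Fin n) :
    pairOp A x x' z z' F h = pairOp (fun p q => A q p) z z' x x' F h := by
  rw [pairOp, sum_comm]
  refine sum_congr rfl fun p _ => sum_congr rfl fun q _ => ?_
  by_cases hqp : q = p
  · simp [hqp]
  · rw [update_comm hqp]
    exact if_congr (by simp only [ne_eq, hqp, Ne.symm hqp, not_false_eq_true, true_and, and_comm])
      rfl rfl

theorem skewDrinfeldOp_apply (y : Fin N → Module.End ℂ W) (s : ℕ) (i j : Fin n)
    (F : (Fin N → Fin n) → W) (h : Fin N → Fin n) :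
    skewDrinfeldOp n N y s i j F h
      = ∑ p : Fin N, if h p = i then ((y p) ^ s) (F (update h p j)) else 0 := rfl

theorem skewDrinfeldOp_mul_apply (y : Fin N → Module.End ℂ W) (a b : ℕ) (x x' z z' : Fin n)
    (F : (Fin N → Fin n) → W) (h : Fin N → Fin n) :
    (skewDrinfeldOp n N y a x x' * skewDrinfeldOp n N y b z z') F h
      = (if x' = z then skewDrinfeldOp n N y (a + b) x z' F h else 0)
        + pairOp (fun p q => y p ^ a * y q ^ b) x x' z z' F h := by
  have split_diag : ∀ p q, (if h p = x ∧ update h p x' q = z then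
      (y p ^ a * y q ^ b) (F (update (update h p x') q z')) else 0)
      = (if p = q then if h p = x ∧ x' = z then (y p ^ (a + b)) (F (update h p z')) else 0 else 0)
        + (if p ≠ q ∧ h p = x ∧ h q = z then
            (y p ^ a * y q ^ b) (F (update (update h p x') q z')) else 0) := by
    intro p q
    rcases eq_or_ne p q with rfl | hpq
    · simp [pow_add]
    · simp [hpq, update_of_ne hpq.symm]
  calc (skewDrinfeldOp n N y a x x' * skewDrinfeldOp n N y b z z') F h
      = ∑ p : Fin N, ∑ q : Fin N, (if h p = x ∧ update h p x' q = z then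
          (y p ^ a * y q ^ b) (F (update (update h p x') q z')) else 0) := by
        rw [Module.End.mul_apply, skewDrinfeldOp_apply]
        refine sum_congr rfl fun p _ => ?_
        rw [skewDrinfeldOp_apply]
        split_ifs with hp
        · simp [map_sum, hp, apply_ite]
        · simp [hp]
    _ = _ := by
        simp only [split_diag, sum_add_distrib, sum_ite_eq, mem_univ, if_true, pairOp]
        congr 1
        split_ifs with hx' <;> simp [skewDrinfeldOp_apply, hx']

theorem skewDrinfeldOp_zero_commutator (y : Fin N → Module.End ℂ W) (m : ℕ)
    (i j k l : Fin n) :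
    skewDrinfeldOp n N y 0 i j * skewDrinfeldOp n N y m k l
      - skewDrinfeldOp n N y m k l * skewDrinfeldOp n N y 0 i j
    = (if j = k then skewDrinfeldOp n N y m i l else 0)
      - (if l = i then skewDrinfeldOp n N y m k j else 0) := by
  refine LinearMap.ext fun F => funext fun h => ?_
  simp only [LinearMap.sub_apply, Pi.sub_apply, skewDrinfeldOp_mul_apply]
  rw [pairOp_comm _ k l i j]
  simp only [pow_zero, one_mul, mul_one, zero_add, add_zero]
  split_ifs <;> simp

variable (ρ : Equiv.Perm (Fin N) →* Module.End ℂ W) {y : Fin N → Module.End ℂ W}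

theorem apply_eq_sign_smul_of_mem_skewInv {F : (Fin N → Fin n) → W} (hF : F ∈ skewInv n N ρ)
    (σ : Equiv.Perm (Fin N)) (h : Fin N → Fin n) :
    ρ σ (F (h ∘ σ)) = ((Equiv.Perm.sign σ : ℤ) : ℂ) • F h :=
  congrFun (hF σ) h

theorem skewDrinfeldOp_mem_skewInv
    (hconj : ∀ (σ : Equiv.Perm (Fin N)) (p : Fin N), ρ σ * y p = y (σ p) * ρ σ)
    (s : ℕ) (i j : Fin n) {F : (Fin N → Fin n) → W} (hF : F ∈ skewInv n N ρ) :
    skewDrinfeldOp n N y s i j F ∈ skewInv n N ρ := by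
  intro σ
  funext h
  have term : ∀ p, ρ σ (if h (σ p) = i then (y p ^ s) (F (update (h ∘ σ) p j)) else 0)
      = ((Equiv.Perm.sign σ : ℤ) : ℂ) •
          (if h (σ p) = i then (y (σ p) ^ s) (F (update h (σ p) j)) else 0) := by
    intro p
    rw [apply_ite (ρ σ), map_zero, smul_ite, smul_zero,
      ← update_comp_eq_of_injective h σ.injective, ← Module.End.mul_apply,
      (SemiconjBy.pow_right (hconj σ p) s).eq, Module.End.mul_apply,
      apply_eq_sign_smul_of_mem_skewInv ρ hF, map_smul]
  change ρ σ (skewDrinfeldOp n N y s i j F (h ∘ σ)) = _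
  rw [skewDrinfeldOp_apply, map_sum]
  simp only [comp_apply, term, ← smul_sum]
  rw [Equiv.sum_comp σ (fun q => if h q = i then (y q ^ s) (F (update h q j)) else 0)]
  rfl

theorem pairOp_eq_of_mem_skewInv {A B : Fin N → Fin N → Module.End ℂ W}
    (hAB : ∀ p q, p ≠ q → A p q = -(B p q * ρ (Equiv.swap p q)))
    {F : (Fin N → Fin n) → W} (hF : F ∈ skewInv n N ρ) (x x' z z' : Fin n)
    (h : Fin N → Fin n) :
    pairOp A x x' z z' F h = pairOp B x z' z x' F h := by
  refine sum_congr rfl fun p _ => sum_congr rfl fun q _ => ?_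
  split_ifs with hpq
  · have hswap : ρ (Equiv.swap p q) (F (update (update h p x') q z'))
        = -F (update (update h p z') q x') := by
      rw [← update_update_comp_swap h hpq.1, apply_eq_sign_smul_of_mem_skewInv ρ hF,
        Equiv.Perm.sign_swap hpq.1]
      simp
    rw [hAB p q hpq.1, LinearMap.neg_apply, Module.End.mul_apply, hswap, map_neg, neg_neg]
  · rfl

theorem skewDrinfeldOp_rtt
    (hconj : ∀ (σ : Equiv.Perm (Fin N)) (p : Fin N), ρ σ * y p = y (σ p) * ρ σ)
    (hycomm : ∀ p q : Fin N, y p * y q - y q * y p = ρ (Equiv.swap p q) * (y p - y q))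
    (r s : ℕ) (i j k l : Fin n) {F : (Fin N → Fin n) → W} (hF : F ∈ skewInv n N ρ)
    (h : Fin N → Fin n) :
    (skewDrinfeldOp n N y (r + 1) i j * skewDrinfeldOp n N y s k l
      - skewDrinfeldOp n N y s k l * skewDrinfeldOp n N y (r + 1) i j
      - (skewDrinfeldOp n N y r i j * skewDrinfeldOp n N y (s + 1) k l
        - skewDrinfeldOp n N y (s + 1) k l * skewDrinfeldOp n N y r i j)) F h
    = (skewDrinfeldOp n N y r k j * skewDrinfeldOp n N y s i l
      - skewDrinfeldOp n N y s k j * skewDrinfeldOp n N y r i l) F h := by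
  have hecke : ∀ p q, p ≠ q →
      y p ^ (r + 1) * y q ^ s - y q ^ s * y p ^ (r + 1)
          - (y p ^ r * y q ^ (s + 1) - y q ^ (s + 1) * y p ^ r)
        = -((y q ^ r * y p ^ s - y q ^ s * y p ^ r) * ρ (Equiv.swap p q)) := by
    intro p q _
    have hp : SemiconjBy (ρ (Equiv.swap p q)) (y p) (y q) := by
      simpa [SemiconjBy] using hconj (Equiv.swap p q) p
    have hq : SemiconjBy (ρ (Equiv.swap p q)) (y q) (y p) := by
      simpa [SemiconjBy] using hconj (Equiv.swap p q) q
    rw [hecke_rtt (hycomm p q) hp hq, mul_sub, ((hp.pow_right s).mul_right (hq.pow_right r)).eq,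
      ((hp.pow_right r).mul_right (hq.pow_right s)).eq]
    noncomm_ring
  calc _ = pairOp (fun p q => y p ^ (r + 1) * y q ^ s - y q ^ s * y p ^ (r + 1)
          - (y p ^ r * y q ^ (s + 1) - y q ^ (s + 1) * y p ^ r)) i j k l F h := by
        simp only [LinearMap.sub_apply, Pi.sub_apply, skewDrinfeldOp_mul_apply, pairOp_sub]
        rw [pairOp_comm _ k l i j, pairOp_comm _ k l i j, show r + 1 + s = r + (s + 1) by omega,
          show s + (r + 1) = s + 1 + r by omega]
        abel
    _ = pairOp (fun p q => y q ^ r * y p ^ s - y q ^ s * y p ^ r) i l k j F h :=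
        pairOp_eq_of_mem_skewInv ρ hecke hF i j k l h
    _ = _ := by
        simp only [LinearMap.sub_apply, Pi.sub_apply, skewDrinfeldOp_mul_apply, pairOp_sub]
        rw [pairOp_comm _ k j i l, pairOp_comm _ k j i l, add_comm s r]
        abel

end Operators

section YangianAction

variable {n N : ℕ}

noncomputable def drinfeldT (y : Fin N → Module.End ℂ W) :
    ℕ → Fin n → Fin n → Module.End ℂ ((Fin N → Fin n) → W)
  | 0, i, j => if i = j then 1 else 0
  | s + 1, i, j => skewDrinfeldOp n N y s i j

variable (ρ : Equiv.Perm (Fin N) →* Module.End ℂ W) {y : Fin N → Module.End ℂ W}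

theorem drinfeldT_mem_skewInv
    (hconj : ∀ (σ : Equiv.Perm (Fin N)) (p : Fin N), ρ σ * y p = y (σ p) * ρ σ)
    (s : ℕ) (i j : Fin n) {F : (Fin N → Fin n) → W} (hF : F ∈ skewInv n N ρ) :
    drinfeldT y s i j F ∈ skewInv n N ρ := by
  cases s with
  | zero => by_cases hij : i = j <;> simp [drinfeldT, hij, hF]
  | succ s => exact skewDrinfeldOp_mem_skewInv ρ hconj s i j hF

theorem drinfeldT_rtt
    (hconj : ∀ (σ : Equiv.Perm (Fin N)) (p : Fin N), ρ σ * y p = y (σ p) * ρ σ)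
    (hycomm : ∀ p q : Fin N, y p * y q - y q * y p = ρ (Equiv.swap p q) * (y p - y q))
    (r s : ℕ) (i j k l : Fin n) {F : (Fin N → Fin n) → W} (hF : F ∈ skewInv n N ρ) :
    (drinfeldT y (r + 1) i j * drinfeldT y s k l - drinfeldT y s k l * drinfeldT y (r + 1) i j
      - (drinfeldT y r i j * drinfeldT y (s + 1) k l - drinfeldT y (s + 1) k l * drinfeldT y r i j))
        F
    = (drinfeldT y r k j * drinfeldT y s i l - drinfeldT y s k j * drinfeldT y r i l) F := by
  rcases r with _ | r <;> rcases s with _ | s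
  · by_cases hij : i = j <;> by_cases hkl : k = l <;> simp [drinfeldT, hij, hkl]
  · simp only [drinfeldT, skewDrinfeldOp_zero_commutator]
    split_ifs <;> subst_vars <;> simp_all
  · simp only [drinfeldT]
    rw [← neg_sub (skewDrinfeldOp n N y 0 k l * _), skewDrinfeldOp_zero_commutator]
    split_ifs <;> subst_vars <;> simp_all
  · exact funext (skewDrinfeldOp_rtt ρ hconj hycomm r s i j k l hF)

end YangianAction

/-- Proposition 1.2, the skew Drinfeld functor: for any
`H_N`-module `W`, the assignments
`T_{ij}^{(s+1)} ↦ Σ_p y_p^s ⊗ E_{ij}^{(p)}` define an action of the Yangian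
`Y(gl_n)` on the subspace of skew invariants `(W ⊗ (ℂ^n)^{⊗N})^{S_N}_-`.
In particular each operator `Σ_p y_p^s ⊗ E_{ij}^{(p)}` preserves that
subspace. -/
theorem skew_drinfeld_functor (n N : ℕ)
    (ρ : Equiv.Perm (Fin N) →* Module.End ℂ W)
    (y : Fin N → Module.End ℂ W)
    (hconj : ∀ (σ : Equiv.Perm (Fin N)) (p : Fin N), ρ σ * y p = y (σ p) * ρ σ)
    (hycomm : ∀ p q : Fin N,
      y p * y q - y q * y p = ρ (Equiv.swap p q) * (y p - y q)) :
    ∃ φ : Yangian n →ₐ[ℂ] Module.End ℂ (skewInv n N ρ),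
      ∀ (s : ℕ) (i j : Fin n) (F : skewInv n N ρ),
        ((φ (yangGen n (s + 1) i j) F : skewInv n N ρ) : (Fin N → Fin n) → W)
          = skewDrinfeldOp n N y s i j (F : (Fin N → Fin n) → W) := by
  let R : ℕ → Fin n → Fin n → Module.End ℂ (skewInv n N ρ) := fun s i j =>
    (drinfeldT y s i j).restrict fun _ hF => drinfeldT_mem_skewInv ρ hconj s i j hF
  let f := FreeAlgebra.lift ℂ fun g : ℕ × Fin n × Fin n => R (g.1 + 1) g.2.1 g.2.2
  have hf : ∀ s i j, f (yangT n s i j) = R s i j := by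
    rintro (_ | s) i j
    · by_cases hij : i = j <;> ext <;> simp [yangT, R, drinfeldT, hij]
    · exact FreeAlgebra.lift_ι_apply _ _
  refine ⟨RingQuot.liftAlgHom ℂ ⟨f, ?_⟩, fun s i j F => ?_⟩
  · rintro _ _ ⟨r, s, i, j, k, l⟩
    simp only [map_sub, map_mul, hf]
    exact LinearMap.ext fun F => Subtype.ext (drinfeldT_rtt ρ hconj hycomm r s i j k l F.2)
  · rw [yangGen, RingQuot.liftAlgHom_mkAlgHom_apply, hf]
    rfl
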